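/- arXiv:1109.2336 — 7 statements merged into one kernel-verified Lean document; each statement's English description precedes it below -/
import Mathlib

section
/- Let K be a holomorphic function on a neighbourhood of 0 in ℂ with a zero of exact order j ≥ 1 at 0, and let η₁, η₂ be holomorphic injective germs at 0 with η₁(0) = η₂(0) = 0 such that K(η₁(z)) = K(η₂(z)) = K(z) near 0. If η₁'(0) = η₂'(0), then η₁ and η₂ agree on a neighbourhood of 0. -/
/-!
Write `K = ψ ^ j` near `0` with `ψ` conformal at `0` (a `j`-th root of `g` times `z`). A symmetry
`η` of `K` then satisfies `(ψ ∘ η) ^ j = ψ ^ j`, so by the identity theorem `ψ ∘ η = ζ ψ` for a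
single `j`-th root of unity `ζ`, and differentiating at `0` gives `ζ = η'(0)`. Hence two symmetries
with the same derivative satisfy `ψ ∘ η₁ = ψ ∘ η₂`, and local injectivity of `ψ` gives `η₁ = η₂`.
-/

open Topology Filter

section

variable {𝕜 : Type*} [NontriviallyNormedField 𝕜] {z₀ : 𝕜}

theorem AnalyticAt.exists_eventually_eq_mul_of_pow_eq {f g : 𝕜 → 𝕜} (hf : AnalyticAt 𝕜 f z₀)
    (hg : AnalyticAt 𝕜 g z₀) {n : ℕ} (hn : 0 < n) (h : ∀ᶠ z in 𝓝 z₀, f z ^ n = g z ^ n) :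
    ∃ ζ : 𝕜, ∀ᶠ z in 𝓝 z₀, f z = ζ * g z := by
  have pointwise : ∀ᶠ z in 𝓝 z₀, ∃ ζ ∈ Polynomial.nthRootsFinset n (1 : 𝕜), f z = ζ * g z := by
    filter_upwards [h] with z hz
    by_cases hgz : g z = 0
    · refine ⟨1, Polynomial.one_mem_nthRootsFinset hn, ?_⟩
      rw [hgz, zero_pow hn.ne', pow_eq_zero_iff hn.ne'] at hz
      rw [hz, hgz, mul_zero]
    · refine ⟨f z / g z, (Polynomial.mem_nthRootsFinset hn 1).2 ?_, (div_mul_cancel₀ _ hgz).symm⟩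
      rw [div_pow, hz, div_self (pow_ne_zero n hgz)]
  obtain ⟨ζ, -, hζ⟩ := (Finset.frequently_exists _).1
    (pointwise.filter_mono (nhdsWithin_le_nhds (s := {z₀}ᶜ))).frequently
  exact ⟨ζ, (hf.frequently_eq_iff_eventually_eq (analyticAt_const.mul hg)).1 hζ⟩

theorem eq_deriv_of_comp_eventually_eq_mul {ψ η : 𝕜 → 𝕜} {a ζ : 𝕜}
    (hψ : DifferentiableAt 𝕜 ψ a) (hψ' : deriv ψ a ≠ 0) (hη : DifferentiableAt 𝕜 η a)
    (hηa : η a = a) (h : ∀ᶠ z in 𝓝 a, ψ (η z) = ζ * ψ z) : ζ = deriv η a := by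
  have hψη : HasDerivAt ψ (deriv ψ a) (η a) := by
    rw [hηa]
    exact hψ.hasDerivAt
  have chain : HasDerivAt (fun z => ψ (η z)) (deriv ψ a * deriv η a) a :=
    hψη.comp a hη.hasDerivAt
  have scaled : HasDerivAt (fun z => ψ (η z)) (ζ * deriv ψ a) a :=
    (hψ.hasDerivAt.const_mul ζ).congr_of_eventuallyEq h
  refine mul_right_cancel₀ hψ' ?_
  rw [scaled.unique chain, mul_comm]

theorem comp_eventually_eq_deriv_mul_of_eventually_eq_pow {K ψ η : 𝕜 → 𝕜} {a : 𝕜} {n : ℕ}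
    (hn : 0 < n) (hψ : AnalyticAt 𝕜 ψ a) (hψ' : deriv ψ a ≠ 0) (hη : AnalyticAt 𝕜 η a)
    (hηa : η a = a) (hKψ : ∀ᶠ z in 𝓝 a, K z = ψ z ^ n) (hKη : ∀ᶠ z in 𝓝 a, K (η z) = K z) :
    ∀ᶠ z in 𝓝 a, ψ (η z) = deriv η a * ψ z := by
  have hη_tendsto : Tendsto η (𝓝 a) (𝓝 a) := by
    simpa only [ContinuousAt, hηa] using hη.continuousAt
  have hψη : AnalyticAt 𝕜 (fun z => ψ (η z)) a := (hηa ▸ hψ).comp hη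
  have hpow : ∀ᶠ z in 𝓝 a, ψ (η z) ^ n = ψ z ^ n := by
    filter_upwards [hKη, hKψ, hη_tendsto.eventually hKψ] with z h₁ h₂ h₃
    rw [← h₃, h₁, h₂]
  obtain ⟨ζ, hζ⟩ := hψη.exists_eventually_eq_mul_of_pow_eq hψ hn hpow
  rwa [← eq_deriv_of_comp_eventually_eq_mul hψ.differentiableAt hψ' hη.differentiableAt hηa hζ]

theorem HasStrictDerivAt.eventuallyEq_of_comp_eventuallyEq [CompleteSpace 𝕜] {α : Type*}
    {ψ : 𝕜 → 𝕜} {ψ' a : 𝕜} (hψ : HasStrictDerivAt ψ ψ' a) (hψ' : ψ' ≠ 0) {l : Filter α}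
    {η₁ η₂ : α → 𝕜} (h₁ : Tendsto η₁ l (𝓝 a)) (h₂ : Tendsto η₂ l (𝓝 a))
    (h : ψ ∘ η₁ =ᶠ[l] ψ ∘ η₂) : η₁ =ᶠ[l] η₂ := by
  have hinv := hψ.eventually_left_inverse hψ'
  filter_upwards [h₁.eventually hinv, h₂.eventually hinv, h] with x e₁ e₂ e
  rw [← e₁, ← e₂]
  exact congrArg _ e

end

theorem AnalyticAt.exists_analyticAt_pow_eq {g : ℂ → ℂ} {z₀ : ℂ} (hg : AnalyticAt ℂ g z₀)
    (hg₀ : g z₀ ≠ 0) {n : ℕ} (hn : 0 < n) :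
    ∃ h : ℂ → ℂ, AnalyticAt ℂ h z₀ ∧ h z₀ ≠ 0 ∧ ∀ z, h z ^ n = g z := by
  obtain ⟨c, hc⟩ := IsAlgClosed.exists_pow_nat_eq (g z₀) hn
  have hc₀ : c ≠ 0 := by rintro rfl; exact hg₀ (by rw [← hc, zero_pow hn.ne'])
  refine ⟨fun z => c * (g z / g z₀) ^ (n⁻¹ : ℂ), ?_, ?_, fun z => ?_⟩
  · refine analyticAt_const.mul ((hg.div analyticAt_const hg₀).cpow analyticAt_const ?_)
    simp [div_self hg₀]
  · simpa [div_self hg₀] using hc₀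
  · rw [mul_pow, Complex.cpow_nat_inv_pow _ hn.ne', hc, mul_div_cancel₀ _ hg₀]

theorem exists_eventually_eq_conformal_pow {K g : ℂ → ℂ} {z₀ : ℂ} {n : ℕ} (hn : 0 < n)
    (hg : AnalyticAt ℂ g z₀) (hg₀ : g z₀ ≠ 0) (hK : ∀ᶠ z in 𝓝 z₀, K z = (z - z₀) ^ n * g z) :
    ∃ ψ : ℂ → ℂ, AnalyticAt ℂ ψ z₀ ∧ deriv ψ z₀ ≠ 0 ∧ ∀ᶠ z in 𝓝 z₀, K z = ψ z ^ n := by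
  obtain ⟨h, hh, hh₀, hpow⟩ := hg.exists_analyticAt_pow_eq hg₀ hn
  have hderiv : HasDerivAt (fun z => (z - z₀) * h z) (h z₀) z₀ := by
    simpa using ((hasDerivAt_id z₀).sub_const z₀).fun_mul hh.differentiableAt.hasDerivAt
  refine ⟨fun z => (z - z₀) * h z, (analyticAt_id.sub analyticAt_const).mul hh,
    hderiv.deriv ▸ hh₀, ?_⟩
  filter_upwards [hK] with z hz
  rw [hz, mul_pow, hpow]

theorem germ_determined_by_derivative_general
    (K : ℂ → ℂ)
    (j : ℕ) (hj : 1 ≤ j)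
    (g : ℂ → ℂ) (hg : AnalyticAt ℂ g 0) (hg0 : g 0 ≠ 0)
    (hfac : ∀ᶠ z in 𝓝 (0 : ℂ), K z = z ^ j * g z)
    (η₁ η₂ : ℂ → ℂ)
    (hη₁ : AnalyticAt ℂ η₁ 0) (hη₂ : AnalyticAt ℂ η₂ 0)
    (hη₁0 : η₁ 0 = 0) (hη₂0 : η₂ 0 = 0)
    (hKη₁ : ∀ᶠ z in 𝓝 (0 : ℂ), K (η₁ z) = K z)
    (hKη₂ : ∀ᶠ z in 𝓝 (0 : ℂ), K (η₂ z) = K z)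
    (hder : deriv η₁ 0 = deriv η₂ 0) :
    η₁ =ᶠ[𝓝 (0 : ℂ)] η₂ := by
  obtain ⟨ψ, hψ, hψ', hKψ⟩ :=
    exists_eventually_eq_conformal_pow hj hg hg0 (by simpa only [sub_zero] using hfac)
  have e₁ := comp_eventually_eq_deriv_mul_of_eventually_eq_pow hj hψ hψ' hη₁ hη₁0 hKψ hKη₁
  have e₂ := comp_eventually_eq_deriv_mul_of_eventually_eq_pow hj hψ hψ' hη₂ hη₂0 hKψ hKη₂
  refine hψ.hasStrictDerivAt.eventuallyEq_of_comp_eventuallyEq hψ'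
    (by simpa only [ContinuousAt, hη₁0] using hη₁.continuousAt)
    (by simpa only [ContinuousAt, hη₂0] using hη₂.continuousAt) ?_
  filter_upwards [e₁, e₂] with z h₁ h₂
  rw [Function.comp_apply, Function.comp_apply, h₁, h₂, hder]

/-- Two conformal germs at `0` fixing `0` which are symmetries of a holomorphic map `K`
with a zero of exact order `j ≥ 1` at `0` (i.e. `K ∘ ηᵢ = K` near `0`) and have the same
derivative at `0` agree on a neighbourhood of `0`. -/
theorem germ_determined_by_derivative
    (K : ℂ → ℂ) (hK : AnalyticAt ℂ K 0) (hK0 : K 0 = 0)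
    (j : ℕ) (hj : 1 ≤ j)
    (g : ℂ → ℂ) (hg : AnalyticAt ℂ g 0) (hg0 : g 0 ≠ 0)
    (hfac : ∀ᶠ z in 𝓝 (0 : ℂ), K z = z ^ j * g z)
    (η₁ η₂ : ℂ → ℂ)
    (hη₁ : AnalyticAt ℂ η₁ 0) (hη₂ : AnalyticAt ℂ η₂ 0)
    (hη₁0 : η₁ 0 = 0) (hη₂0 : η₂ 0 = 0)
    (hη₁d : deriv η₁ 0 ≠ 0) (hη₂d : deriv η₂ 0 ≠ 0)
    (hKη₁ : ∀ᶠ z in 𝓝 (0 : ℂ), K (η₁ z) = K z)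
    (hKη₂ : ∀ᶠ z in 𝓝 (0 : ℂ), K (η₂ z) = K z)
    (hder : deriv η₁ 0 = deriv η₂ 0) :
    η₁ =ᶠ[𝓝 (0 : ℂ)] η₂ :=
  germ_determined_by_derivative_general K j hj g hg hg0 hfac η₁ η₂ hη₁ hη₂ hη₁0 hη₂0 hKη₁ hKη₂ hder
end

section
/- Let K be holomorphic near x ∈ ℂ with val(K, x) = j ≥ 2, and let κ be a holomorphic injective germ at K(x) with κ(K(x)) = K(x). Then there exists a holomorphic injective germ δ at x with δ(x) = x, K(δ(z)) = κ(K(z)) for all z near x, and δ'(x)^j = κ'(K(x)). -/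
/-!
Taking an analytic `j`-th root `ρ` of the valency factor `g`, the function `φ z = (z - x) ρ z`
is a local coordinate at `x` in which `K z - K x = φ z ^ j`. Since `κ` fixes `K x`, also
`κ (K z) - K x = (z - x) ^ j g z κ₁ (K z)` with `κ₁ = dslope κ (K x)`, so it equals `ψ z ^ j` for
another coordinate `ψ`. The lift is `δ = φ⁻¹ ∘ ψ`. Choosing the roots with `ρ x = c`,
`ψ' x = c d` where `c ^ j = g x` and `d ^ j = κ' (K x)` gives `δ' x = d`.
-/

open Topology Filter

/-- `HasValency H x n` : the holomorphic map `H` has local valency `n` at `x`. -/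
def HasValency (H : ℂ → ℂ) (x : ℂ) (n : ℕ) : Prop :=
  ∃ g : ℂ → ℂ, AnalyticAt ℂ g x ∧ g x ≠ 0 ∧
    ∀ᶠ z in 𝓝 x, H z - H x = (z - x) ^ n * g z

section

variable {𝕜 : Type*} [NontriviallyNormedField 𝕜]

theorem eventually_comp_sub_eq_pow_mul_dslope {K g κ : 𝕜 → 𝕜} {x : 𝕜} {n : ℕ}
    (hK : ∀ᶠ z in 𝓝 x, K z - K x = (z - x) ^ n * g z) :
    ∀ᶠ z in 𝓝 x, κ (K z) - κ (K x) = (z - x) ^ n * (g z * dslope κ (K x) (K z)) := by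
  filter_upwards [hK] with z hz
  rw [← sub_smul_dslope, smul_eq_mul, hz, mul_assoc]

theorem AnalyticAt.dslope {f : 𝕜 → 𝕜} {a : 𝕜} (hf : AnalyticAt 𝕜 f a) :
    AnalyticAt 𝕜 (dslope f a) a :=
  let ⟨_, hp⟩ := hf
  hp.has_fpower_series_dslope_fslope.analyticAt

variable [CompleteSpace 𝕜]

theorem AnalyticAt.exists_analyticAt_rightInverse {f : 𝕜 → 𝕜} {a f' : 𝕜}
    (hf : AnalyticAt 𝕜 f a) (hf' : HasDerivAt f f' a) (h0 : f' ≠ 0) :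
    ∃ g : 𝕜 → 𝕜, AnalyticAt 𝕜 g (f a) ∧ g (f a) = a ∧ HasDerivAt g f'⁻¹ (f a) ∧
      ∀ᶠ w in 𝓝 (f a), f (g w) = w := by
  have hs : HasStrictDerivAt f f' a := hf'.deriv ▸ hf.hasStrictDerivAt
  have hF := hs.hasStrictFDerivAt_equiv h0
  refine ⟨hs.localInverse f f' a h0, ?_, hF.localInverse_apply_image,
    (hs.to_localInverse h0).hasDerivAt, hs.eventually_right_inverse h0⟩
  exact (hF.toOpenPartialHomeomorph f).analyticAt_symm' hF.mem_toOpenPartialHomeomorph_source hf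
    hF.hasFDerivAt.fderiv

theorem AnalyticAt.exists_pow_eq [CharZero 𝕜] {g : 𝕜 → 𝕜} {x c : 𝕜} {n : ℕ}
    (hg : AnalyticAt 𝕜 g x) (hn : n ≠ 0) (hc : c ≠ 0) (hcg : c ^ n = g x) :
    ∃ ρ : 𝕜 → 𝕜, AnalyticAt 𝕜 ρ x ∧ ρ x = c ∧ ∀ᶠ z in 𝓝 x, ρ z ^ n = g z := by
  obtain ⟨r, hr, hrc, -, hpow⟩ := (analyticAt_id.pow n).exists_analyticAt_rightInverse
    (hasDerivAt_pow n c) (mul_ne_zero (Nat.cast_ne_zero.2 hn) (pow_ne_zero _ hc))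
  simp only [hcg] at hr hrc hpow
  exact ⟨r ∘ g, hr.comp hg, hrc, hg.continuousAt.eventually hpow⟩

theorem exists_eventually_eq_pow_of_eventually_eq_pow_mul [CharZero 𝕜] {H g : 𝕜 → 𝕜}
    {x c : 𝕜} {n : ℕ} (hg : AnalyticAt 𝕜 g x) (hn : n ≠ 0) (hc : c ≠ 0) (hcg : c ^ n = g x)
    (hH : ∀ᶠ z in 𝓝 x, H z = (z - x) ^ n * g z) :
    ∃ φ : 𝕜 → 𝕜, AnalyticAt 𝕜 φ x ∧ φ x = 0 ∧ HasDerivAt φ c x ∧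
      ∀ᶠ z in 𝓝 x, H z = φ z ^ n := by
  obtain ⟨ρ, hρ, hρx, hρg⟩ := hg.exists_pow_eq hn hc hcg
  refine ⟨fun z => (z - x) * ρ z, by fun_prop, by simp, ?_, ?_⟩
  · simpa [hρx] using ((hasDerivAt_id x).sub_const x).fun_mul hρ.differentiableAt.hasDerivAt
  · filter_upwards [hH, hρg] with z hHz hρz
    rw [hHz, mul_pow, hρz]

theorem exists_analyticAt_lift {φ ψ : 𝕜 → 𝕜} {x a b : 𝕜} (hφ : AnalyticAt 𝕜 φ x)
    (hψ : AnalyticAt 𝕜 ψ x) (hφψ : φ x = ψ x) (hφ' : HasDerivAt φ a x) (ha : a ≠ 0)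
    (hψ' : HasDerivAt ψ b x) :
    ∃ δ : 𝕜 → 𝕜, AnalyticAt 𝕜 δ x ∧ δ x = x ∧ HasDerivAt δ (a⁻¹ * b) x ∧
      ∀ᶠ z in 𝓝 x, φ (δ z) = ψ z := by
  obtain ⟨r, hr, hrx, hr', hφr⟩ := hφ.exists_analyticAt_rightInverse hφ' ha
  rw [hφψ] at hr hrx hr' hφr
  exact ⟨r ∘ ψ, hr.comp hψ, hrx, hr'.comp x hψ', hψ.continuousAt.eventually hφr⟩

end

/-- Lifting lemma through a critical point: if `val(K, x) = j ≥ 2` and `κ` is a conformal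
germ at `K x` fixing `K x`, then there is a conformal germ `δ` at `x` fixing `x` with
`K ∘ δ = κ ∘ K` near `x` and `δ'(x)^j = κ'(K x)`. -/
theorem lift_conformal_germ_through_critical_point
    (K : ℂ → ℂ) (x : ℂ) (hK : AnalyticAt ℂ K x)
    (j : ℕ) (hj : 2 ≤ j) (hval : HasValency K x j)
    (κ : ℂ → ℂ) (hκ : AnalyticAt ℂ κ (K x)) (hκfix : κ (K x) = K x)
    (hκd : deriv κ (K x) ≠ 0) :
    ∃ δ : ℂ → ℂ, AnalyticAt ℂ δ x ∧ δ x = x ∧ deriv δ x ≠ 0 ∧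
      (∀ᶠ z in 𝓝 x, K (δ z) = κ (K z)) ∧ deriv δ x ^ j = deriv κ (K x) := by
  obtain ⟨g, hg, hgx, hKg⟩ := hval
  have hj0 : j ≠ 0 := by omega
  obtain ⟨c, hc⟩ := IsAlgClosed.exists_pow_nat_eq (g x) (Nat.pos_of_ne_zero hj0)
  obtain ⟨d, hd⟩ := IsAlgClosed.exists_pow_nat_eq (deriv κ (K x)) (Nat.pos_of_ne_zero hj0)
  have hc0 : c ≠ 0 := by rintro rfl; exact hgx (by rw [← hc, zero_pow hj0])
  have hd0 : d ≠ 0 := by rintro rfl; exact hκd (by rw [← hd, zero_pow hj0])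
  obtain ⟨φ, hφ, hφx, hφ', hKφ⟩ :=
    exists_eventually_eq_pow_of_eventually_eq_pow_mul (H := fun z => K z - K x) hg hj0 hc0 hc hKg
  obtain ⟨ψ, hψ, hψx, hψ', hκψ⟩ := exists_eventually_eq_pow_of_eventually_eq_pow_mul
    (hg.mul (hκ.dslope.comp hK)) hj0 (mul_ne_zero hc0 hd0)
    (by simp [mul_pow, hc, hd, dslope_same]) (eventually_comp_sub_eq_pow_mul_dslope hKg (κ := κ))
  obtain ⟨δ, hδ, hδx, hδ', hφδ⟩ := exists_analyticAt_lift hφ hψ (hφx.trans hψx.symm) hφ' hc0 hψ'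
  have hδd : deriv δ x = d := by rw [hδ'.deriv, inv_mul_cancel_left₀ hc0]
  refine ⟨δ, hδ, hδx, hδd ▸ hd0, ?_, hδd ▸ hd⟩
  have hδ_tendsto : Tendsto δ (𝓝 x) (𝓝 x) := by
    simpa only [hδx] using hδ.continuousAt.tendsto
  filter_upwards [hδ_tendsto.eventually hKφ, hκψ, hφδ] with z hKδ hκK hφδz
  rw [hκfix] at hκK
  exact sub_left_inj.mp (by rw [hKδ, hφδz, hκK])
end

section
/- Let β > 0. There is no Borel probability measure m on ℂ \ {0} such that m(exp(A)) = ∫_A |exp(z)|^β dm(z) for every Borel set A ⊆ ℂ \ {0} on which exp is injective. -/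
open MeasureTheory Set

/-!
If `m` were `β`-conformal, then for a box `B` of height `2π` on which `|Re z| < R`, the
translates `B + 2πi(n + 1)`, `n ∈ ℕ`, are disjoint, avoid `0`, and are all mapped by `exp`
injectively onto the same annulus `exp '' B`. On them the density `|exp z|^β` is bounded by
`e^{|β| R}`, so `m (exp '' B) ≤ e^{|β| R} m (B + 2πi(n + 1))` for every `n`; as these
infinitely many disjoint sets have total mass at most `1`, every such annulus is `m`-null.
The annuli exhaust `ℂ \ {0}`, which has full measure.
-/

open Complex Real Function

def IsConformalExp (β : ℝ) (m : Measure ℂ) : Prop :=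
  ∀ A : Set ℂ, MeasurableSet A → A ⊆ {(0 : ℂ)}ᶜ → InjOn Complex.exp A →
    m (Complex.exp '' A) = ∫⁻ z in A, ENNReal.ofReal (‖Complex.exp z‖ ^ β) ∂m

theorem MeasureTheory.eq_zero_of_le_mul_measure_of_pairwise_disjoint {α ι : Type*}
    [MeasurableSpace α] [Infinite ι] {μ : Measure α} [IsFiniteMeasure μ] {s : ι → Set α}
    (hs : ∀ i, MeasurableSet (s i)) (hd : Pairwise (Disjoint on s)) {x C : ENNReal}
    (hC : C ≠ ⊤) (h : ∀ i, x ≤ C * μ (s i)) : x = 0 := by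
  by_contra hx
  have hpos : 0 < x / C := ENNReal.div_pos hx hC
  have hfin := Measure.finite_const_le_meas_of_disjoint_iUnion μ hpos hs hd (measure_ne_top μ _)
  refine Set.infinite_univ (α := ι) (hfin.subset fun i _ ↦ ?_)
  exact ENNReal.div_le_of_le_mul' (h i)

def periodBox (R a : ℝ) : Set ℂ := {z | |z.re| < R ∧ z.im ∈ Ico a (a + 2 * π)}

theorem measurableSet_periodBox (R a : ℝ) : MeasurableSet (periodBox R a) :=
  (measurableSet_lt continuous_re.abs.measurable measurable_const).inter
    (measurable_im measurableSet_Ico)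

theorem injOn_exp_periodBox (R a : ℝ) : InjOn Complex.exp (periodBox R a) := by
  intro z hz w hw hzw
  obtain ⟨n, hn⟩ := exp_eq_exp_iff_exists_int.mp hzw
  have him : z.im - w.im = n * (2 * π) := by
    rw [hn]
    simp
  have hlt : (n : ℝ) < 1 :=
    lt_of_mul_lt_mul_right (by linarith [hz.2.2, hw.2.1] : (n : ℝ) * (2 * π) < 1 * (2 * π))
      two_pi_pos.le
  have hgt : (-1 : ℝ) < n :=
    lt_of_mul_lt_mul_right (by linarith [hz.2.1, hw.2.2] : -1 * (2 * π) < (n : ℝ) * (2 * π))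
      two_pi_pos.le
  have hn0 : n = 0 := by
    have : n < 1 := by exact_mod_cast hlt
    have : -1 < n := by exact_mod_cast hgt
    omega
  simpa [hn0] using hn

theorem exp_image_periodBox (R a : ℝ) :
    Complex.exp '' periodBox R a = {w | w ≠ 0 ∧ |Real.log ‖w‖| < R} := by
  ext w
  constructor
  · rintro ⟨z, hz, rfl⟩
    exact ⟨exp_ne_zero z, by simpa [Complex.norm_exp] using hz.1⟩
  · rintro ⟨hw, hR⟩
    -- shift `log w` by the multiple of `2πi` that brings its imaginary part into `[a, a + 2π)`
    refine ⟨log w - toIcoDiv two_pi_pos a (log w).im * (2 * π * I), ⟨?_, ?_⟩, ?_⟩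
    · simpa [log_re] using hR
    · convert toIcoMod_mem_Ico two_pi_pos a (log w).im using 1
      rw [← self_sub_toIcoDiv_zsmul, zsmul_eq_mul, sub_im]
      congr 1
      simp
    · rw [exp_periodic.sub_int_mul_eq, exp_log hw]

theorem disjoint_periodBox {R a b : ℝ} (h : a + 2 * π ≤ b) :
    Disjoint (periodBox R a) (periodBox R b) :=
  Set.disjoint_left.mpr fun _ hz hw ↦ by linarith [hz.2.2, hw.2.1]

theorem norm_exp_rpow_le (β : ℝ) {R : ℝ} {z : ℂ} (hz : |z.re| < R) :
    ‖Complex.exp z‖ ^ β ≤ Real.exp (|β| * R) := by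
  rw [Complex.norm_exp, ← Real.exp_mul, Real.exp_le_exp]
  calc z.re * β ≤ |z.re * β| := le_abs_self _
    _ = |β| * |z.re| := by rw [abs_mul, mul_comm]
    _ ≤ |β| * R := by gcongr

theorem IsConformalExp.measure_annulus_eq_zero {β : ℝ} {m : Measure ℂ} [IsFiniteMeasure m]
    (hm : IsConformalExp β m) (R : ℝ) : m {w | w ≠ 0 ∧ |Real.log ‖w‖| < R} = 0 := by
  set S : ℕ → Set ℂ := fun n ↦ periodBox R (2 * π * (n + 1))
  have hS0 (n : ℕ) : S n ⊆ {0}ᶜ := fun z hz h0 ↦ by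
    have hpos : (0 : ℝ) < 2 * π * (n + 1) := by positivity
    have := hz.2.1
    rw [h0, zero_im] at this
    linarith
  have hdisj : Pairwise (Disjoint on S) := by
    refine (pairwise_disjoint_on S).mpr fun i j hij ↦ disjoint_periodBox ?_
    have : (i : ℝ) + 1 ≤ j := by exact_mod_cast hij
    nlinarith [pi_pos]
  refine eq_zero_of_le_mul_measure_of_pairwise_disjoint (μ := m)
    (fun n ↦ measurableSet_periodBox R _) hdisj (ENNReal.ofReal_ne_top (r := Real.exp (|β| * R)))
    fun n ↦ ?_
  calc m {w | w ≠ 0 ∧ |Real.log ‖w‖| < R} = m (Complex.exp '' S n) := by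
        rw [exp_image_periodBox]
    _ = ∫⁻ z in S n, ENNReal.ofReal (‖Complex.exp z‖ ^ β) ∂m :=
        hm _ (measurableSet_periodBox R _) (hS0 n) (injOn_exp_periodBox R _)
    _ ≤ ∫⁻ _ in S n, ENNReal.ofReal (Real.exp (|β| * R)) ∂m :=
        setLIntegral_mono measurable_const fun z hz ↦
          ENNReal.ofReal_le_ofReal (norm_exp_rpow_le β hz.1)
    _ = ENNReal.ofReal (Real.exp (|β| * R)) * m (S n) := setLIntegral_const _ _

theorem iUnion_annulus_eq_compl_zero :
    ⋃ n : ℕ, {w : ℂ | w ≠ 0 ∧ |Real.log ‖w‖| < n} = {0}ᶜ := by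
  ext w
  simp only [mem_iUnion, mem_ofPred_eq, mem_compl_iff, mem_singleton_iff]
  constructor
  · rintro ⟨_, hw, _⟩
    exact hw
  · intro hw
    obtain ⟨n, hn⟩ := exists_nat_gt |Real.log ‖w‖|
    exact ⟨n, hw, hn⟩

theorem no_conformal_measure_for_exp_general
    (β : ℝ)
    (m : Measure ℂ) [IsProbabilityMeasure m] (hm0 : m {0} = 0)
    (hconf : ∀ A : Set ℂ, MeasurableSet A → A ⊆ {(0 : ℂ)}ᶜ →
      Set.InjOn Complex.exp A →
      m (Complex.exp '' A) =
        ∫⁻ z in A, ENNReal.ofReal (‖Complex.exp z‖ ^ β) ∂m) :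
    False := by
  have hcompl : m {0}ᶜ = 0 := by
    rw [← iUnion_annulus_eq_compl_zero]
    exact measure_iUnion_null fun n ↦ IsConformalExp.measure_annulus_eq_zero hconf n
  have hm1 : m {0} = 1 := (prob_compl_eq_zero_iff (measurableSet_singleton 0)).mp hcompl
  exact zero_ne_one (hm0.symm.trans hm1)

/-- There is no Borel probability measure on `ℂ \ {0}` which is `β`-conformal for
`exp` with respect to the flat metric, for any `β > 0`:
no probability measure `m` with `m {0} = 0` can satisfy
`m (exp '' A) = ∫_A |exp z|^β dm` for all Borel sets `A ⊆ ℂ \ {0}` on which `exp`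
is injective. -/
theorem no_conformal_measure_for_exp
    (β : ℝ) (hβ : 0 < β)
    (m : Measure ℂ) [IsProbabilityMeasure m] (hm0 : m {0} = 0)
    (hconf : ∀ A : Set ℂ, MeasurableSet A → A ⊆ {(0 : ℂ)}ᶜ →
      Set.InjOn Complex.exp A →
      m (Complex.exp '' A) =
        ∫⁻ z in A, ENNReal.ofReal (‖Complex.exp z‖ ^ β) ∂m) :
    False :=
  no_conformal_measure_for_exp_general β m hm0 hconf
end

section
/- Let R : ℂ → ℂ be a polynomial of degree d ≥ 2 acting on a compact totally invariant set J ⊆ ℂ (R^{-1}(J) = J), and let m be a non-atomic Borel probability measure on J satisfying m(R(A)) = ∫_A e^β dm = e^β m(A) for every Borel set A ⊆ J on which R is injective. If m gives zero mass to the finite set R(C) of critical values of R in J, then β = log d and m(R^{-1}(B)) = m(B) for every Borel set B ⊆ J, i.e. m is R-invariant. -/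
/-!
Away from the finitely many critical points, `R` is locally injective, so the complement of the
critical set splits into countably many Borel pieces on which `R` is injective. Applying
conformality piece by piece, `e^β · m(R⁻¹ B)` is the integral over `B` of the number of preimages
of a point, which is `d` off the `m`-null set of critical values; hence
`e^β · m(R⁻¹ B) = d · m(B)`. Taking `B = J` (where `R⁻¹ J = J`) gives `e^β = d`, and then
`m(R⁻¹ B) = m(B)`.
-/

open Function MeasureTheory Set
open scoped ENNReal

open Topology in
theorem exists_measurable_partition_injOn {α β : Type*} [TopologicalSpace α]
    [SecondCountableTopology α] [MeasurableSpace α] [OpensMeasurableSpace α] {f : α → β}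
    {U : Set α} (hU : IsOpen U) (hf : ∀ x ∈ U, ∃ s ∈ 𝓝 x, InjOn f s) :
    ∃ V : ℕ → Set α, (∀ n, MeasurableSet (V n)) ∧ Pairwise (Disjoint on V) ∧
      (∀ n, InjOn f (V n)) ∧ ⋃ n, V n = U := by
  set S : Set (Set α) := {s | IsOpen s ∧ s ⊆ U ∧ InjOn f s}
  have hSU : ⋃₀ S = U := by
    refine (sUnion_subset fun s hs => hs.2.1).antisymm fun x hx => ?_
    obtain ⟨s, hs, hinj⟩ := hf x hx
    exact ⟨interior s ∩ U, ⟨isOpen_interior.inter hU, inter_subset_right,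
      hinj.mono (interior_subset.trans' inter_subset_left)⟩, mem_interior_iff_mem_nhds.2 hs, hx⟩
  obtain ⟨T, hTc, hTS, hTU⟩ := TopologicalSpace.isOpen_sUnion_countable S fun s hs => hs.1
  -- `∅` is added so that the enumerated family is nonempty even when `U` is empty
  obtain ⟨g, hg⟩ := (hTc.insert ∅).exists_eq_range (insert_nonempty _ _)
  have hgS : ∀ n, g n ∈ S := fun n =>
    insert_subset (show ∅ ∈ S from ⟨isOpen_empty, empty_subset _, injOn_empty _⟩) hTS
      (hg ▸ mem_range_self n)
  refine ⟨disjointed g, .disjointed fun n => (hgS n).1.measurableSet, disjoint_disjointed g,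
    fun n => (hgS n).2.2.mono (disjointed_subset g n), ?_⟩
  rw [iUnion_disjointed, ← sUnion_range, ← hg, sUnion_insert, empty_union, hTU, hSU]

theorem tsum_indicator_image_eq_encard {ι α β : Type*} {f : α → β} {V : ι → Set α}
    (hV : Pairwise (Disjoint on V)) (hf : ∀ i, InjOn f (V i)) (w : β) :
    ∑' i, (f '' V i).indicator 1 w = ((f ⁻¹' {w} ∩ ⋃ i, V i).encard : ℝ≥0∞) := by
  have hsum : ∑' i, (f '' V i).indicator 1 w = ({i | w ∈ f '' V i}.encard : ℝ≥0∞) := by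
    rw [← ENNReal.tsum_set_one, tsum_subtype _ fun _ => (1 : ℝ≥0∞)]
    rfl
  rw [hsum]
  congr 1
  choose idx hidx using fun z : ↥(f ⁻¹' {w} ∩ ⋃ i, V i) => mem_iUnion.1 z.2.2
  have hidx_eq : ∀ z i, z.1 ∈ V i → idx z = i := fun z i hz => by
    by_contra hne
    exact disjoint_left.1 (hV hne) (hidx z) hz
  refine (encard_congr (Equiv.ofBijective
    (fun z => (⟨idx z, z, hidx z, z.2.1⟩ : {i | w ∈ f '' V i})) ⟨?_, ?_⟩)).symm
  · intro z₁ z₂ h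
    have h' : idx z₁ = idx z₂ := congrArg Subtype.val h
    exact Subtype.ext <| hf _ (hidx z₁) (h' ▸ hidx z₂) (z₁.2.1.trans z₂.2.1.symm)
  · rintro ⟨i, z, hz, rfl⟩
    exact ⟨⟨z, rfl, mem_iUnion.2 ⟨i, hz⟩⟩, Subtype.ext (hidx_eq _ i hz)⟩

theorem lintegral_encard_preimage_singleton_inter_iUnion {ι α β : Type*} [Countable ι]
    [MeasurableSpace β] (μ : Measure β) {f : α → β} {V : ι → Set α}
    (hV : Pairwise (Disjoint on V)) (hf : ∀ i, InjOn f (V i))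
    (hfV : ∀ i, MeasurableSet (f '' V i)) :
    ∫⁻ w, ((f ⁻¹' {w} ∩ ⋃ i, V i).encard : ℝ≥0∞) ∂μ = ∑' i, μ (f '' V i) := by
  simp_rw [← tsum_indicator_image_eq_encard hV hf]
  rw [lintegral_tsum fun i => (measurable_one.indicator (hfV i)).aemeasurable]
  exact tsum_congr fun i => lintegral_indicator_one (hfV i)

namespace Polynomial

variable {K : Type*} [Field K] [IsAlgClosed K]

theorem encard_preimage_singleton_eval {R : K[X]} {w : K}
    (hw : w ∉ (fun z => R.eval z) '' {z | R.derivative.eval z = 0}) :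
    ((fun z => R.eval z) ⁻¹' {w}).encard = R.natDegree := by
  classical
  set p := R - C w
  have hroot : ∀ z, p.IsRoot z ↔ R.eval z = w := fun z => by simp [p, sub_eq_zero]
  have hp0 : p ≠ 0 := by
    intro hp
    have hR : R = C w := sub_eq_zero.1 hp
    exact hw ⟨0, by simp [hR], by simp [hR]⟩
  -- a multiple root of `R - w` would be a critical point over `w`
  have hnodup : p.roots.Nodup := by
    refine Multiset.nodup_iff_count_le_one.2 fun z => ?_
    rw [count_roots]
    by_contra! hz
    obtain ⟨hpz, hp'z⟩ := (one_lt_rootMultiplicity_iff_isRoot hp0).1 hz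
    exact hw ⟨z, by simpa [p] using hp'z, (hroot z).1 hpz⟩
  have hfiber : (fun z => R.eval z) ⁻¹' {w} = (p.roots.toFinset : Set K) := by
    ext z
    simp only [mem_preimage, mem_singleton_iff, Finset.mem_coe, Multiset.mem_toFinset,
      mem_roots hp0, hroot]
  rw [hfiber, encard_coe_eq_coe_finsetCard, Multiset.toFinset_card_of_nodup hnodup,
    splits_iff_card_roots.1 (IsAlgClosed.splits p), natDegree_sub_C]

theorem encard_preimage_singleton_inter_compl_critical_inter {R : K[X]} {w : K}
    (hw : w ∉ (fun z => R.eval z) '' {z | R.derivative.eval z = 0}) (B : Set K) :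
    (((fun z => R.eval z) ⁻¹' {w} ∩
      ({z | R.derivative.eval z = 0}ᶜ ∩ (fun z => R.eval z) ⁻¹' B)).encard : ℝ≥0∞) =
      B.indicator (fun _ => (R.natDegree : ℝ≥0∞)) w := by
  have hfiber : (fun z => R.eval z) ⁻¹' {w} ∩ {z | R.derivative.eval z = 0}ᶜ =
      (fun z => R.eval z) ⁻¹' {w} :=
    inter_eq_left.2 fun z hz hzC => hw ⟨z, hzC, hz⟩
  rw [← inter_assoc, hfiber, ← preimage_inter]
  by_cases hwB : w ∈ B
  · rw [singleton_inter_of_mem hwB, indicator_of_mem hwB, encard_preimage_singleton_eval hw,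
      ENat.toENNReal_coe]
  · rw [singleton_inter_eq_empty.2 hwB, indicator_of_notMem hwB, preimage_empty, encard_empty,
      ENat.toENNReal_zero]

open Topology in
theorem exists_mem_nhds_injOn_eval {𝕜 : Type*} [NontriviallyNormedField 𝕜]
    [CompleteSpace 𝕜] {R : 𝕜[X]} {z : 𝕜} (hz : R.derivative.eval z ≠ 0) :
    ∃ s ∈ 𝓝 z, InjOn (fun w => R.eval w) s :=
  ⟨_, (R.hasStrictDerivAt z).eventually_left_inverse hz,
    fun _ hx _ hy hxy => hx.symm.trans ((congrArg _ hxy).trans hy)⟩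

theorem mul_measure_preimage_eq_natDegree_mul (R : ℂ[X]) (μ : Measure ℂ) {J : Set ℂ}
    (hJ : (fun z => R.eval z) ⁻¹' J ⊆ J) {c : ℝ≥0∞}
    (hconf : ∀ A : Set ℂ, MeasurableSet A → A ⊆ J → InjOn (fun z => R.eval z) A →
      μ ((fun z => R.eval z) '' A) = c * μ A)
    (hC : μ {z | R.derivative.eval z = 0} = 0)
    (hcrit : μ ((fun z => R.eval z) '' {z | R.derivative.eval z = 0}) = 0)
    {B : Set ℂ} (hB : MeasurableSet B) (hBJ : B ⊆ J) :
    c * μ ((fun z => R.eval z) ⁻¹' B) = R.natDegree * μ B := by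
  set f : ℂ → ℂ := fun z => R.eval z
  set C : Set ℂ := {z | R.derivative.eval z = 0}
  have hf : Continuous f := R.continuous
  obtain ⟨V, hVm, hVd, hVinj, hVU⟩ := exists_measurable_partition_injOn
    (isClosed_eq R.derivative.continuous continuous_const).isOpen_compl
    fun z hz => exists_mem_nhds_injOn_eval hz
  set A : ℕ → Set ℂ := fun n => V n ∩ f ⁻¹' B
  have hAm : ∀ n, MeasurableSet (A n) := fun n => (hVm n).inter (hB.preimage hf.measurable)
  have hAinj : ∀ n, InjOn f (A n) := fun n => (hVinj n).mono inter_subset_left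
  have hAd : Pairwise (Disjoint on A) := fun i j hij =>
    (hVd hij).mono inter_subset_left inter_subset_left
  have hAU : ⋃ n, A n = Cᶜ ∩ f ⁻¹' B := by rw [← iUnion_inter, hVU]
  have hfiber : ∀ᵐ w ∂μ, ((f ⁻¹' {w} ∩ ⋃ n, A n).encard : ℝ≥0∞) =
      B.indicator (fun _ => (R.natDegree : ℝ≥0∞)) w :=
    (measure_eq_zero_iff_ae_notMem.1 hcrit).mono fun w hw => by
      rw [hAU, encard_preimage_singleton_inter_compl_critical_inter hw]
  calc c * μ (f ⁻¹' B) = c * ∑' n, μ (A n) := by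
        rw [← measure_iUnion hAd hAm, hAU, inter_comm, measure_inter_conull (by rwa [compl_compl])]
    _ = ∑' n, μ (f '' A n) := by
        rw [← ENNReal.tsum_mul_left]
        exact tsum_congr fun n => (hconf _ (hAm n)
          (fun z hz => hJ (hBJ hz.2)) (hAinj n)).symm
    _ = ∫⁻ w, ((f ⁻¹' {w} ∩ ⋃ n, A n).encard : ℝ≥0∞) ∂μ :=
        (lintegral_encard_preimage_singleton_inter_iUnion μ hAd hAinj fun n =>
          (hAm n).image_of_continuousOn_injOn hf.continuousOn (hAinj n)).symm
    _ = R.natDegree * μ B := by rw [lintegral_congr_ae hfiber, lintegral_indicator_const hB]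

end Polynomial

/-- Lyubich-type rigidity: if `R` is a polynomial of degree `d ≥ 2`, `J` a compact totally
invariant set, and `m` a non-atomic `e^β`-conformal probability measure on `J` giving no
mass to the critical values of `R`, then `β = log d` and `m` is `R`-invariant. -/
theorem constant_conformal_measure_is_invariant
    (R : Polynomial ℂ) (hd : 2 ≤ R.natDegree)
    (J : Set ℂ) (hJ : IsCompact J)
    (hinv : (fun z => R.eval z) ⁻¹' J = J)
    (β : ℝ)
    (m : Measure ℂ) [IsProbabilityMeasure m]
    (hJfull : m Jᶜ = 0)
    (hna : ∀ z : ℂ, m {z} = 0)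
    (hconf : ∀ A : Set ℂ, MeasurableSet A → A ⊆ J →
      Set.InjOn (fun z => R.eval z) A →
      m ((fun z => R.eval z) '' A) = ENNReal.ofReal (Real.exp β) * m A)
    (hcrit : m ((fun z => R.eval z) '' {z : ℂ | R.derivative.eval z = 0}) = 0) :
    β = Real.log R.natDegree ∧
    ∀ B : Set ℂ, MeasurableSet B → B ⊆ J →
      m ((fun z => R.eval z) ⁻¹' B) = m B := by
  have hCfin : {z | R.derivative.eval z = 0}.Finite :=
    Polynomial.finite_setOfPred_isRoot (Polynomial.derivative_ne_zero.2 (by omega))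
  have : NullSingletonClass m := ⟨hna⟩
  have key := fun B (hB : MeasurableSet B) hBJ => R.mul_measure_preimage_eq_natDegree_mul m
    hinv.subset hconf (hCfin.measure_zero m) hcrit hB hBJ
  have hmJ : m J = 1 := (prob_compl_eq_zero_iff hJ.measurableSet).1 hJfull
  have hexp : ENNReal.ofReal (Real.exp β) = R.natDegree := by
    simpa [hinv, hmJ] using key J hJ.measurableSet subset_rfl
  have hd0 : (R.natDegree : ℝ≥0∞) ≠ 0 := Nat.cast_ne_zero.2 (by omega)
  refine ⟨?_, fun B hB hBJ => ?_⟩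
  · rw [← ENNReal.ofReal_natCast, ENNReal.ofReal_eq_ofReal_iff (Real.exp_pos β).le
      (Nat.cast_nonneg _)] at hexp
    rw [← hexp, Real.log_exp]
  · exact (ENNReal.mul_right_inj hd0 (ENNReal.natCast_ne_top _)).1 (hexp ▸ key B hB hBJ)
end

section
/- Let A be a C*-algebra, α and α¹ strongly continuous one-parameter automorphism groups of A, and (u_t)_{t∈ℝ} a strictly continuous one-parameter group of unitaries in the multiplier algebra M(A), each u_t fixed by both α and α¹, such that u_t α_t(a) u_t* = α¹_t(a) for all t, a. Suppose h ∈ A is a positive invertible element, fixed by α, with u_t = h^{-2it/β} (i.e., u_t implements the perturbation by h). If ω is a β-KMS state for α with ω(h²) > 0, then the state a ↦ ω(hah)/ω(h²) is a β-KMS state for α¹. -/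
/-!
Conjugation by the entire family `E z = h ^ (2 i z / β) = exp (z • (2 i / β) • log h)` turns an
entire extension `F` of `t ↦ α'_t b` into the entire extension `G z = E z * F z * E (-z)` of
`t ↦ α_t b`, and `E (-iβ) = h²`, so `F (iβ) = h² G (iβ) h⁻²`. The KMS condition of `ω` for the pair
`h a h²`, `b h⁻¹`, together with `ω (x h) = ω (h x)` (KMS for the `α`-fixed `h`), then gives
`ω (h a F(iβ) h) = ω (h b a h)`.
-/

open Topology Filter

variable {A : Type} [CStarAlgebra A]

/-- `ω` is a `β`-KMS state for the one-parameter automorphism group `α`. -/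
def IsKMSState (α : ℝ → (A ≃⋆ₐ[ℂ] A)) (β : ℝ) (ω : A → ℂ) : Prop :=
  IsLinearMap ℂ ω ∧ ω 1 = 1 ∧
  (∀ a : A, 0 ≤ (ω (star a * a)).re ∧ (ω (star a * a)).im = 0) ∧
  ∀ (a b : A) (F : ℂ → A), Differentiable ℂ F → (∀ t : ℝ, F (t : ℂ) = α t b) →
    ω (a * F (Complex.I * (β : ℂ))) = ω (b * a)

open Complex NormedSpace
open scoped ComplexOrder

theorem exp_smul_mul_exp_neg_smul {𝕂 𝔸 : Type*} [RCLike 𝕂] [NormedRing 𝔸] [NormedAlgebra 𝕂 𝔸]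
    [CompleteSpace 𝔸] (x : 𝔸) (z : 𝕂) : exp (z • x) * exp (-z • x) = 1 := by
  let +nondep : NormedAlgebra ℚ 𝔸 := .restrictScalars ℚ 𝕂 𝔸
  rw [← exp_add_of_commute (((Commute.refl x).smul_left z).smul_right (-z)), ← add_smul,
    add_neg_cancel, zero_smul, NormedSpace.exp_zero]

theorem spectrum_subset_slitPlane_of_nonneg_of_isUnit [PartialOrder A] [StarOrderedRing A]
    {a : A} (ha : 0 ≤ a) (ha' : IsUnit a) : spectrum ℂ a ⊆ slitPlane := fun _ hx =>
  mem_slitPlane_iff_not_le_zero.mpr fun hx0 =>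
    spectrum.zero_notMem ℂ ha' (le_antisymm hx0 (spectrum_nonneg_of_nonneg ha hx) ▸ hx)

theorem cfc_cpow_eq_exp_smul_cfc_log {a : A} [IsStarNormal a] (ha : spectrum ℂ a ⊆ slitPlane)
    (w : ℂ) : cfc (fun x : ℂ => x ^ w) a = exp (w • cfc log a) := by
  have hlog : ContinuousOn log (spectrum ℂ a) := fun x hx =>
    (continuousAt_clog (ha hx)).continuousWithinAt
  calc cfc (fun x : ℂ => x ^ w) a = cfc (fun x => Complex.exp (w * log x)) a :=
        cfc_congr fun x hx => by
          rw [cpow_def_of_ne_zero (slitPlane_ne_zero (ha hx)), mul_comm]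
    _ = cfc Complex.exp (cfc (w * log ·) a) :=
        cfc_comp' _ _ a continuous_exp.continuousOn (continuousOn_const.mul hlog)
    _ = exp (w • cfc log a) := by
        rw [CFC.complex_exp_eq_normedSpace_exp, cfc_const_mul w log a hlog]

theorem exp_natCast_smul_cfc_log {a : A} [IsStarNormal a] (ha : spectrum ℂ a ⊆ slitPlane)
    (n : ℕ) : exp ((n : ℂ) • cfc log a) = a ^ n := by
  rw [← cfc_cpow_eq_exp_smul_cfc_log ha, ← cfc_pow_id (R := ℂ) a n]
  exact cfc_congr fun x _ => cpow_natCast x n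

theorem isLinearMap_sandwich_div {R : Type*} [Ring R] [Algebra ℂ R] {ω : R → ℂ}
    (hω : IsLinearMap ℂ ω) (h : R) (c : ℂ) : IsLinearMap ℂ fun a => ω (h * a * h) / c where
  map_add x y := by simp only [mul_add, add_mul, hω.map_add, add_div]
  map_smul r x := by
    simp only [mul_smul_comm, smul_mul_assoc, hω.map_smul, smul_eq_mul, mul_div_assoc]

namespace IsKMSState

variable {α α' : ℝ → (A ≃⋆ₐ[ℂ] A)} {β : ℝ} {ω : A → ℂ}

theorem apply_mul_comm_of_forall_fixed (hω : IsKMSState α β ω) {c : A} (hc : ∀ t, α t c = c)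
    (a : A) : ω (a * c) = ω (c * a) :=
  hω.2.2.2 a c (fun _ => c) (differentiable_const c) fun t => (hc t).symm

theorem sandwich_kms_condition (hω : IsKMSState α β ω) {E : ℂ → A} (hE : Differentiable ℂ E)
    (hEinv : ∀ z, E z * E (-z) = 1) (hα' : ∀ t a, α' t a = E (-t) * α t a * E t)
    {h : A} (hfix : ∀ t, α t h = h) (hEh : E (-(I * β)) = h * h)
    (a b : A) (F : ℂ → A) (hF : Differentiable ℂ F) (hFt : ∀ t : ℝ, F t = α' t b) :
    ω (h * (a * F (I * β)) * h) = ω (h * (b * a) * h) := by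
  set q := E (I * β)
  have hqh : q * (h * h) = 1 := by simpa only [hEh] using hEinv (I * β)
  have hhq : h * h * q = 1 := by simpa only [neg_neg, hEh] using hEinv (-(I * β))
  have hq (x : A) : q * (h * (h * x)) = x := by rw [← mul_assoc h, ← mul_assoc, hqh, one_mul]
  have hq' (x : A) : h * (h * (q * x)) = x := by rw [← mul_assoc, ← mul_assoc, hhq, one_mul]
  have hqfix (t : ℝ) : α t q = q :=
    left_inv_eq_right_inv (by rw [← map_one (α t), ← hqh, map_mul, map_mul, hfix]) hhq
  set G := fun z => E z * F z * E (-z) * (q * h)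
  have hG : Differentiable ℂ G := ((hE.mul hF).mul (hE.comp differentiable_neg)).mul_const _
  have hGt (t : ℝ) : G t = α t (b * (q * h)) := by
    calc G t = (E t * E (-t)) * α t b * (E t * E (-t)) * (q * h) := by
          simp only [G, hFt, hα', mul_assoc]
      _ = α t (b * (q * h)) := by rw [hEinv, one_mul, mul_one, map_mul, map_mul, hqfix, hfix]
  calc ω (h * (a * F (I * β)) * h) = ω (h * a * (h * h) * G (I * β)) := by
        simp only [G, hEh, show E (I * β) = q from rfl, mul_assoc, hq']
    _ = ω (b * (q * h) * (h * a * (h * h))) := hω.2.2.2 _ _ G hG hGt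
    _ = ω (b * a * h * h) := by simp only [mul_assoc, hq]
    _ = ω (h * (b * a) * h) := by
        rw [hω.apply_mul_comm_of_forall_fixed hfix]
        simp only [mul_assoc]

theorem nonneg_apply_star_mul_self (hω : IsKMSState α β ω) (a : A) : 0 ≤ ω (star a * a) :=
  Complex.nonneg_iff.mpr ⟨(hω.2.2.1 a).1, (hω.2.2.1 a).2.symm⟩

theorem sandwich (hω : IsKMSState α β ω) {E : ℂ → A} (hE : Differentiable ℂ E)
    (hEinv : ∀ z, E z * E (-z) = 1) (hα' : ∀ t a, α' t a = E (-t) * α t a * E t)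
    {h : A} (hsa : IsSelfAdjoint h) (hfix : ∀ t, α t h = h) (hEh : E (-(I * β)) = h * h)
    (hωh : 0 < ω (h * h)) : IsKMSState α' β fun a => ω (h * a * h) / ω (h * h) := by
  refine ⟨isLinearMap_sandwich_div hω.1 h _, by simpa only [mul_one] using div_self hωh.ne',
    fun a => ?_, fun a b F hF hFt => ?_⟩
  · have hsq : h * (star a * a) * h = star (a * h) * (a * h) := by
      rw [star_mul, hsa.star_eq]
      noncomm_ring
    obtain ⟨hre, him⟩ := Complex.nonneg_iff.mp
      (div_nonneg (hsq ▸ hω.nonneg_apply_star_mul_self (a * h)) hωh.le)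
    exact ⟨hre, him.symm⟩
  · exact congrArg (· / ω (h * h)) (hω.sandwich_kms_condition hE hEinv hα' hfix hEh a b F hF hFt)

end IsKMSState

theorem kms_state_perturbation_general
    [PartialOrder A] [StarOrderedRing A]
    (α α' : ℝ → (A ≃⋆ₐ[ℂ] A))
    (β : ℝ) (hβ : β ≠ 0)
    (u : ℝ → A)
    (huni : ∀ t : ℝ, u t * star (u t) = 1 ∧ star (u t) * u t = 1)
    (hconj : ∀ (t : ℝ) (a : A), u t * α t a * star (u t) = α' t a)
    (h : A) (hpos : 0 ≤ h) (hunit : IsUnit h) (hfix : ∀ t : ℝ, α t h = h)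
    (hu : ∀ t : ℝ, u t = cfc (fun x : ℂ => x ^ (-2 * Complex.I * (t : ℂ) / (β : ℂ))) h)
    (ω : A → ℂ) (hω : IsKMSState α β ω)
    (hωh : 0 < (ω (h * h)).re) (hωh' : (ω (h * h)).im = 0) :
    IsKMSState α' β (fun a => ω (h * a * h) / ω (h * h)) := by
  have hslit := spectrum_subset_slitPlane_of_nonneg_of_isUnit hpos hunit
  have hsa := IsSelfAdjoint.of_nonneg hpos
  have := hsa.isStarNormal
  set E : ℂ → A := fun z => exp (z • ((2 * I / β) • cfc log h))
  have hEinv (z : ℂ) : E z * E (-z) = 1 := exp_smul_mul_exp_neg_smul _ z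
  have hEu (t : ℝ) : E (-t) = u t := by
    rw [hu, cfc_cpow_eq_exp_smul_cfc_log hslit]
    simp only [E, smul_smul]
    congr 2
    ring
  have hEstar (t : ℝ) : E t = star (u t) :=
    (left_inv_eq_right_inv (huni t).2 (by simpa only [← hEu, neg_neg] using hEinv (-(t : ℂ)))).symm
  have hEh : E (-(I * β)) = h * h := by
    rw [← pow_two, ← exp_natCast_smul_cfc_log hslit 2]
    simp only [E, smul_smul]
    congr 2
    field_simp
    linear_combination (-2 : ℂ) * I_sq
  have hα' (t : ℝ) (a : A) : α' t a = E (-t) * α t a * E t := by rw [hEu, hEstar, hconj]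
  exact hω.sandwich (differentiable_exp_smul_const ℂ _) hEinv hα' hsa hfix hEh
    (Complex.pos_iff.mpr ⟨hωh, hωh'.symm⟩)

/-- Perturbation of KMS states: if `α'_t = Ad(u_t) ∘ α_t` with `u_t = h^{-2it/β}` for a
positive invertible `α`-fixed element `h`, and `ω` is a `β`-KMS state for `α` with
`ω(h²) > 0`, then `a ↦ ω(h a h)/ω(h²)` is a `β`-KMS state for `α'`. -/
theorem kms_state_perturbation
    [PartialOrder A] [StarOrderedRing A]
    (α α' : ℝ → (A ≃⋆ₐ[ℂ] A))
    (hα0 : ∀ a : A, α 0 a = a) (halpha'0 : ∀ a : A, α' 0 a = a)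
    (hαadd : ∀ s t : ℝ, ∀ a : A, α (s + t) a = α s (α t a))
    (halpha'add : ∀ s t : ℝ, ∀ a : A, α' (s + t) a = α' s (α' t a))
    (hαcont : ∀ a : A, Continuous fun t : ℝ => α t a)
    (halpha'cont : ∀ a : A, Continuous fun t : ℝ => α' t a)
    (β : ℝ) (hβ : β ≠ 0)
    (u : ℝ → A) (hucont : Continuous u)
    (huni : ∀ t : ℝ, u t * star (u t) = 1 ∧ star (u t) * u t = 1)
    (hufix : ∀ s t : ℝ, α t (u s) = u s ∧ α' t (u s) = u s)
    (hconj : ∀ (t : ℝ) (a : A), u t * α t a * star (u t) = α' t a)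
    (h : A) (hpos : 0 ≤ h) (hunit : IsUnit h) (hfix : ∀ t : ℝ, α t h = h)
    (hu : ∀ t : ℝ, u t = cfc (fun x : ℂ => x ^ (-2 * Complex.I * (t : ℂ) / (β : ℂ))) h)
    (ω : A → ℂ) (hω : IsKMSState α β ω)
    (hωh : 0 < (ω (h * h)).re) (hωh' : (ω (h * h)).im = 0) :
    IsKMSState α' β (fun a => ω (h * a * h) / ω (h * h)) :=
  kms_state_perturbation_general α α' β hβ u huni hconj h hpos hunit hfix hu ω hω hωh hωh'
end

section
/- Let H : S → S be a non-constant holomorphic map of a connected Riemann surface, let x ∈ S, and suppose x is pre-periodic but not pre-critical for H: there exist minimal n ≥ 0 and p ≥ 1 with H^{n+p}(x) = H^n(x), and val(H^k, x) = 1 for all k. Then every holomorphic injective germ η at x with η(x) = x satisfying H^m(η(z)) = H^{kp+m}(z) near x for some m ≥ n and k ∈ ℤ is uniquely determined (as a germ) by k; namely η = (H^n)^{-1} ∘ H^{kp+n} near x, where (H^n)^{-1} is the local inverse of the injective germ H^n at x. -/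
/-!
Put `k = a - b` with `a, b ∈ ℕ` and `N = n + b p`. Since `H^n(x)` is periodic of period `p`,
both `H^N` and `H^{b p} ∘ H^{k p + n}` send `x` to `H^n(x)`, so `g := (H^N)⁻¹ ∘ H^{b p}` is a
left inverse of `H^n` near `x`. If `H^m ∘ η = H^{k p + m}`, then `η` and `g ∘ H^{k p + n}` both
fix `x` and agree after composing with `H^{N + m}`; as no point of the orbit of `x` is critical,
`H^{N + m}` is injective near `x`, so the two germs coincide.
-/

open Topology Filter Function

theorem Function.iterate_add_mul_apply_of_iterate_add_apply {α : Type*} {f : α → α} {x : α}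
    {n p : ℕ} (h : f^[n + p] x = f^[n] x) (c : ℕ) : f^[n + c * p] x = f^[n] x := by
  have hper : IsPeriodicPt f p (f^[n] x) := by
    rwa [IsPeriodicPt, IsFixedPt, ← iterate_add_apply, add_comm]
  rw [add_comm, iterate_add_apply, mul_comm]
  exact (hper.mul_const c).eq

theorem deriv_iterate_eq_prod {𝕜 : Type*} [NontriviallyNormedField 𝕜] {H : 𝕜 → 𝕜}
    (hH : Differentiable 𝕜 H) (x : 𝕜) (r : ℕ) :
    deriv H^[r] x = ∏ k ∈ Finset.range r, deriv H (H^[k] x) := by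
  induction r with
  | zero => simp
  | succ r ih =>
    rw [iterate_succ', deriv_comp x (hH _) ((hH.iterate r) x), ih, Finset.prod_range_succ,
      mul_comm]

theorem deriv_iterate_ne_zero {𝕜 : Type*} [NontriviallyNormedField 𝕜] {H : 𝕜 → 𝕜}
    (hH : Differentiable 𝕜 H) {x : 𝕜} (hx : ∀ k : ℕ, deriv H (H^[k] x) ≠ 0) (r : ℕ) :
    deriv H^[r] x ≠ 0 := by
  rw [deriv_iterate_eq_prod hH]
  exact Finset.prod_ne_zero_iff.mpr fun k _ => hx k

theorem AnalyticAt.exists_localInverse {𝕜 : Type*} [NontriviallyNormedField 𝕜] [CompleteSpace 𝕜]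
    [CharZero 𝕜] {f : 𝕜 → 𝕜} {x : 𝕜} (hf : AnalyticAt 𝕜 f x) (hf' : deriv f x ≠ 0) :
    ∃ g : 𝕜 → 𝕜, AnalyticAt 𝕜 g (f x) ∧ (∀ᶠ z in 𝓝 x, g (f z) = z) ∧
      ∀ᶠ w in 𝓝 (f x), f (g w) = w :=
  ⟨_, hf.analyticAt_localInverse hf', HasStrictDerivAt.eventually_left_inverse ..,
    HasStrictDerivAt.eventually_right_inverse ..⟩

theorem Filter.EventuallyEq.of_comp_of_eventually_leftInverse {α β γ : Type*} {l : Filter α}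
    {l' : Filter β} {F : β → γ} {L : γ → β} (hL : ∀ᶠ y in l', L (F y) = y) {u v : α → β}
    (hu : Tendsto u l l') (hv : Tendsto v l l') (h : ∀ᶠ z in l, F (u z) = F (v z)) :
    u =ᶠ[l] v := by
  filter_upwards [h, hu.eventually hL, hv.eventually hL] with z h hu hv
  rw [← hu, h, hv]

theorem Filter.Tendsto.comp_of_eventually_leftInverse {α β γ : Type*} [TopologicalSpace α]
    [TopologicalSpace β] {F : α → β} {G : β → α} {y : α} (hG : ContinuousAt G (F y))
    (hGF : ∀ᶠ z in 𝓝 y, G (F z) = z) {l : Filter γ} {u : γ → β}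
    (hu : Tendsto u l (𝓝 (F y))) : Tendsto (G ∘ u) l (𝓝 y) := by
  simpa only [hGF.self_of_nhds] using hG.tendsto.comp hu

theorem exists_localInverse_iterate {H : ℂ → ℂ} (hH : Differentiable ℂ H) {x : ℂ}
    (hx : ∀ k : ℕ, deriv H (H^[k] x) ≠ 0) (r : ℕ) :
    ∃ g : ℂ → ℂ, AnalyticAt ℂ g (H^[r] x) ∧ (∀ᶠ z in 𝓝 x, g (H^[r] z) = z) ∧
      ∀ᶠ w in 𝓝 (H^[r] x), H^[r] (g w) = w :=
  ((hH.iterate r).analyticAt x).exists_localInverse (deriv_iterate_ne_zero hH hx r)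

theorem Int.toNat_add_toNat_neg_mul {k : ℤ} {n p : ℕ} (hk : 0 ≤ k * p + n) :
    (k * p + n).toNat + (-k).toNat * p = n + k.toNat * p := by
  zify
  rw [Int.toNat_of_nonneg hk]
  linear_combination (-(p : ℤ)) * Int.toNat_sub_toNat_neg k

theorem isotropy_germ_unique_of_not_precritical_general
    (H : ℂ → ℂ) (hH : Differentiable ℂ H)
    (x : ℂ) (n p : ℕ)
    (hper : H^[n + p] x = H^[n] x)
    (hnoncrit : ∀ k : ℕ, deriv H (H^[k] x) ≠ 0)
    (k : ℤ) (hk : 0 ≤ k * (p : ℤ) + (n : ℤ)) :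
    ∃ g : ℂ → ℂ, AnalyticAt ℂ g (H^[n] x) ∧ (∀ᶠ z in 𝓝 x, g (H^[n] z) = z) ∧
      ∀ (η : ℂ → ℂ) (m : ℕ), n ≤ m → 0 ≤ k * (p : ℤ) + (m : ℤ) →
        AnalyticAt ℂ η x → η x = x → deriv η x ≠ 0 →
        (∀ᶠ z in 𝓝 x, H^[m] (η z) = H^[(k * (p : ℤ) + (m : ℤ)).toNat] z) →
        η =ᶠ[𝓝 x] fun z => g (H^[(k * (p : ℤ) + (n : ℤ)).toNat] z) := by
  set t := (k * (p : ℤ) + (n : ℤ)).toNat with ht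
  set b := (-k).toNat
  have hN : H^[n + b * p] x = H^[n] x := iterate_add_mul_apply_of_iterate_add_apply hper b
  have horbit : (H^[b * p] ∘ H^[t]) x = H^[n + b * p] x := by
    rw [comp_apply, ← iterate_add_apply, add_comm, Int.toNat_add_toNat_neg_mul hk, hN,
      iterate_add_mul_apply_of_iterate_add_apply hper]
  obtain ⟨G, hGa, hGl, hGr⟩ := exists_localInverse_iterate hH hnoncrit (n + b * p)
  refine ⟨G ∘ H^[b * p], hGa.comp_of_eq ((hH.iterate _).analyticAt _) ?_, ?_, ?_⟩
  · rw [← iterate_add_apply, add_comm, hN]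
  · filter_upwards [hGl] with z hz
    rwa [comp_apply, ← iterate_add_apply, add_comm]
  intro η m _ hkm hηa hηx _ hη
  have hexp : n + (k * (p : ℤ) + (m : ℤ)).toNat = m + t := by
    zify; rw [ht, Int.toNat_of_nonneg hk, Int.toNat_of_nonneg hkm]; ring
  have hw : Tendsto (H^[b * p] ∘ H^[t]) (𝓝 x) (𝓝 (H^[n + b * p] x)) :=
    ((hH.iterate _).continuous.comp (hH.iterate _).continuous).tendsto' x _ horbit
  have hη_tendsto : Tendsto η (𝓝 x) (𝓝 x) := by
    simpa only [hηx] using hηa.continuousAt.tendsto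
  obtain ⟨L, -, hL, -⟩ := exists_localInverse_iterate hH hnoncrit (n + b * p + m)
  refine Filter.EventuallyEq.of_comp_of_eventually_leftInverse hL hη_tendsto
    (hw.comp_of_eventually_leftInverse hGa.continuousAt hGl) ?_
  filter_upwards [hη, hw.eventually hGr] with z hηz hGz
  rw [comp_apply] at hGz
  calc H^[n + b * p + m] (η z) = H^[n + b * p] (H^[m] (η z)) := iterate_add_apply ..
    _ = H^[m] (H^[b * p] (H^[t] z)) := by
      simp only [hηz, ← iterate_add_apply]; congr 1; omega
    _ = H^[n + b * p + m] (G (H^[b * p] (H^[t] z))) := by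
      rw [add_comm _ m, iterate_add_apply, hGz]

/-- Isotropy germs at a pre-periodic, non-pre-critical point: if `x` is pre-periodic
for the non-constant holomorphic map `H` with minimal pre-period `n` and period `p`,
and no point of the forward orbit of `x` is critical, then any conformal germ `η` at `x`
fixing `x` with `H^m ∘ η = H^{kp+m}` near `x` (some `m ≥ n`) is uniquely determined as a
germ by `k`; namely `η = (H^n)⁻¹ ∘ H^{kp+n}` for the local inverse `g` of `H^n` at `x`. -/
theorem isotropy_germ_unique_of_not_precritical
    (H : ℂ → ℂ) (hH : Differentiable ℂ H) (hnc : ∀ c : ℂ, H ≠ fun _ => c)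
    (x : ℂ) (n p : ℕ) (hp : 1 ≤ p)
    (hper : H^[n + p] x = H^[n] x)
    (hpmin : ∀ q : ℕ, 1 ≤ q → q < p → H^[n + q] x ≠ H^[n] x)
    (hnmin : ∀ m : ℕ, m < n → H^[m + p] x ≠ H^[m] x)
    (hnoncrit : ∀ k : ℕ, deriv H (H^[k] x) ≠ 0)
    (k : ℤ) (hk : 0 ≤ k * (p : ℤ) + (n : ℤ)) :
    ∃ g : ℂ → ℂ, AnalyticAt ℂ g (H^[n] x) ∧ (∀ᶠ z in 𝓝 x, g (H^[n] z) = z) ∧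
      ∀ (η : ℂ → ℂ) (m : ℕ), n ≤ m → 0 ≤ k * (p : ℤ) + (m : ℤ) →
        AnalyticAt ℂ η x → η x = x → deriv η x ≠ 0 →
        (∀ᶠ z in 𝓝 x, H^[m] (η z) = H^[(k * (p : ℤ) + (m : ℤ)).toNat] z) →
        η =ᶠ[𝓝 x] fun z => g (H^[(k * (p : ℤ) + (n : ℤ)).toNat] z) :=
  isotropy_germ_unique_of_not_precritical_general H hH x n p hper hnoncrit k hk
end

section
/- Let H : S → S be a non-constant holomorphic map on a connected Riemann surface, x ∈ S a point which is pre-periodic to a non-critical periodic orbit with least pre-period n and period p, and suppose val(H, H^j(x)) = 1 for all j ≥ n while d = val(H^n, x) ≥ 2. Then the set of germs at x of holomorphic injective maps η fixing x with H^n ∘ η = H^n near x forms, under composition, a cyclic group of order d. -/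
/-!
Writing `H^n z - H^n x = (z - x)^d g z` with `g x ≠ 0` and taking a holomorphic `d`-th root `h`
of `g`, the Böttcher coordinate `φ z = (z - x) h z` is a local chart at `x` in which
`H^n = H^n x + φ^d`. A symmetry germ `η` then satisfies `(φ ∘ η)^d = φ^d`, so `(φ ∘ η) / φ` is a
continuous function with values in the finite set of `d`-th roots of unity, hence a constant
`ζ^i` for a fixed primitive root `ζ`, and `η = φ⁻¹ ∘ (ζ^i * ·) ∘ φ`. Conversely these conjugated rotations are symmetries, and
since `‖ζ‖ = 1` they can all be computed inside one disc, where they compose like the rotations.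
-/

open Topology Filter Function

theorem Set.RightInvOn.iterate_conj_apply {α β : Type*} {φ : α → β} {ψ : β → α} {L : β → β}
    {V : Set β} (hψ : Set.RightInvOn ψ φ V) (hL : Set.MapsTo L V V) {z : α}
    (hz : ψ (φ z) = z) (hφz : φ z ∈ V) (i : ℕ) :
    (fun z => ψ (L (φ z)))^[i] z = ψ (L^[i] (φ z)) := by
  induction i with
  | zero => exact hz.symm
  | succ i ih => rw [iterate_succ_apply', ih, hψ (hL.iterate i hφz), iterate_succ_apply']

theorem ContinuousAt.eventually_eq_of_eventually_mem_finite {X Y : Type*} [TopologicalSpace X]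
    [TopologicalSpace Y] [T1Space Y] {q : X → Y} {x : X} {T : Set Y} (hT : T.Finite)
    (hq : ContinuousAt q x) (hqT : ∀ᶠ z in 𝓝[≠] x, q z ∈ T) : ∀ᶠ z in 𝓝 x, q z = q x := by
  have hopen : IsOpen (T \ {q x})ᶜ := (hT.subset Set.sdiff_subset).isClosed.isOpen_compl
  filter_upwards [eventually_nhdsWithin_iff.1 hqT, hq (hopen.mem_nhds (by simp))]
    with z hzT hz
  by_cases hzx : z = x
  · rw [hzx]
  · by_contra hne
    exact hz ⟨hzT hzx, hne⟩

theorem exists_pow_eq_one_and_eventually_eq_mul {𝕜 : Type*} [NontriviallyNormedField 𝕜]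
    {a b : 𝕜 → 𝕜} {x : 𝕜} {d : ℕ} (hd : d ≠ 0) (ha : DifferentiableAt 𝕜 a x)
    (hb : DifferentiableAt 𝕜 b x) (hax : a x = 0) (hbx : b x = 0) (hb' : deriv b x ≠ 0)
    (hab : ∀ᶠ z in 𝓝 x, a z ^ d = b z ^ d) :
    ∃ ω : 𝕜, ω ^ d = 1 ∧ ∀ᶠ z in 𝓝 x, a z = ω * b z := by
  have hsa := continuousAt_dslope_same.2 ha
  have hsb := continuousAt_dslope_same.2 hb
  have hsbx : dslope b x x ≠ 0 := by rwa [dslope_same]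
  -- `q` agrees with `a / b` off `x` and is continuous at `x`
  set q := dslope a x / dslope b x with hq
  have hfac : ∀ᶠ z in 𝓝 x, a z = q z * b z ∧ b z = (z - x) * dslope b x z ∧
      dslope b x z ≠ 0 := by
    filter_upwards [hsb.eventually_ne hsbx] with z hz
    have hza := sub_smul_dslope a x z
    have hzb := sub_smul_dslope b x z
    rw [smul_eq_mul, hax, sub_zero] at hza
    rw [smul_eq_mul, hbx, sub_zero] at hzb
    refine ⟨?_, hzb.symm, hz⟩
    rw [← hza, ← hzb, hq, Pi.div_apply]
    field_simp
  have hroot : ∀ᶠ z in 𝓝[≠] x, q z ∈ Polynomial.nthRootsFinset d (1 : 𝕜) := by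
    filter_upwards [eventually_nhdsWithin_of_eventually_nhds (hfac.and hab),
      self_mem_nhdsWithin] with z ⟨⟨hza, hzb, hz⟩, hzab⟩ hzx
    have hbz : b z ≠ 0 := by
      rw [hzb]
      exact mul_ne_zero (sub_ne_zero.2 hzx) hz
    rw [Polynomial.mem_nthRootsFinset (Nat.pos_of_ne_zero hd)]
    rw [hza, mul_pow] at hzab
    exact mul_eq_right₀ (pow_ne_zero d hbz) |>.1 hzab
  have hconst : ∀ᶠ z in 𝓝 x, q z = q x := (hsa.div hsb hsbx).eventually_eq_of_eventually_mem_finite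
    (Polynomial.nthRootsFinset d (1 : 𝕜)).finite_toSet hroot
  obtain ⟨z, hzq, hz⟩ := (hroot.and (eventually_nhdsWithin_of_eventually_nhds hconst)).exists
  refine ⟨q x, ?_, ?_⟩
  · rw [← hz]
    exact (Polynomial.mem_nthRootsFinset (Nat.pos_of_ne_zero hd) 1).1 hzq
  · filter_upwards [hfac, hconst] with z hz hzq
    rw [hz.1, hzq]

theorem AnalyticAt.exists_pow_eq_s18 {g : ℂ → ℂ} {x : ℂ} (hg : AnalyticAt ℂ g x) (hgx : g x ≠ 0)
    {d : ℕ} (hd : d ≠ 0) : ∃ h : ℂ → ℂ, AnalyticAt ℂ h x ∧ h x ≠ 0 ∧ ∀ z, h z ^ d = g z := by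
  -- normalising by `g x` keeps the argument of the power in the slit plane near `x`
  set h := fun z => g x ^ (d⁻¹ : ℂ) * (g z / g x) ^ (d⁻¹ : ℂ)
  have hpow : ∀ z, h z ^ d = g z := fun z => by
    rw [mul_pow, Complex.cpow_nat_inv_pow _ hd, Complex.cpow_nat_inv_pow _ hd,
      mul_div_cancel₀ _ hgx]
  refine ⟨h, ?_, fun hx => hgx ?_, hpow⟩
  · refine analyticAt_const.mul ((hg.div analyticAt_const hgx).cpow analyticAt_const ?_)
    simp [hgx]
  · rw [← hpow x, hx, zero_pow hd]

theorem HasValency.ne_zero {f : ℂ → ℂ} {x : ℂ} {d : ℕ} (hf : HasValency f x d) : d ≠ 0 := by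
  rintro rfl
  obtain ⟨g, -, hgx, hfg⟩ := hf
  have hfx := hfg.self_of_nhds
  rw [sub_self, pow_zero, one_mul] at hfx
  exact hgx hfx.symm

structure IsBottcherCoord (f : ℂ → ℂ) (x : ℂ) (d : ℕ) (φ : ℂ → ℂ) : Prop where
  analyticAt : AnalyticAt ℂ φ x
  apply_self : φ x = 0
  deriv_ne_zero : deriv φ x ≠ 0
  eventually_sub_eq_pow : ∀ᶠ z in 𝓝 x, f z - f x = φ z ^ d

theorem HasValency.exists_isBottcherCoord {f : ℂ → ℂ} {x : ℂ} {d : ℕ} (hf : HasValency f x d) :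
    ∃ φ, IsBottcherCoord f x d φ := by
  have hd := hf.ne_zero
  obtain ⟨g, hg, hgx, hfg⟩ := hf
  obtain ⟨h, hh, hhx, hhg⟩ := hg.exists_pow_eq_s18 hgx hd
  have hφ' : HasDerivAt (fun z => (z - x) * h z) (h x) x := by
    simpa using ((hasDerivAt_id x).sub_const x).fun_mul hh.differentiableAt.hasDerivAt
  refine ⟨fun z => (z - x) * h z, ⟨?_, by simp, by rwa [hφ'.deriv], ?_⟩⟩
  · exact (analyticAt_id.sub analyticAt_const).mul hh
  · filter_upwards [hfg] with z hz
    rw [hz, mul_pow, hhg]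

namespace IsBottcherCoord

variable {f φ : ℂ → ℂ} {x ζ : ℂ} {d : ℕ} (B : IsBottcherCoord f x d φ)

noncomputable def inv : ℂ → ℂ :=
  B.analyticAt.hasStrictDerivAt.localInverse φ (deriv φ x) x B.deriv_ne_zero

theorem analyticAt_inv : AnalyticAt ℂ B.inv 0 :=
  B.apply_self ▸ B.analyticAt.analyticAt_localInverse B.deriv_ne_zero

theorem hasDerivAt_inv : HasDerivAt B.inv (deriv φ x)⁻¹ 0 :=
  B.apply_self ▸ (B.analyticAt.hasStrictDerivAt.to_localInverse B.deriv_ne_zero).hasDerivAt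

theorem eventually_inv_apply : ∀ᶠ z in 𝓝 x, B.inv (φ z) = z :=
  B.analyticAt.hasStrictDerivAt.eventually_left_inverse B.deriv_ne_zero

theorem eventually_apply_inv : ∀ᶠ w in 𝓝 0, φ (B.inv w) = w :=
  B.apply_self ▸ B.analyticAt.hasStrictDerivAt.eventually_right_inverse B.deriv_ne_zero

noncomputable def rotation (ζ : ℂ) (z : ℂ) : ℂ := B.inv (ζ * φ z)

theorem rotation_self : B.rotation ζ x = x := by
  simpa [rotation, B.apply_self] using B.eventually_inv_apply.self_of_nhds

theorem analyticAt_rotation : AnalyticAt ℂ (B.rotation ζ) x :=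
  B.analyticAt_inv.comp_of_eq (analyticAt_const.mul B.analyticAt) (by simp [B.apply_self])

theorem hasDerivAt_rotation : HasDerivAt (B.rotation ζ) ζ x := by
  have hinv : HasDerivAt B.inv (deriv φ x)⁻¹ (ζ * φ x) := by
    rw [B.apply_self, mul_zero]
    exact B.hasDerivAt_inv
  refine (hinv.comp x (B.analyticAt.differentiableAt.hasDerivAt.const_mul ζ)).congr_deriv ?_
  field_simp [B.deriv_ne_zero]

theorem eventually_apply_rotation : ∀ᶠ z in 𝓝 x, φ (B.rotation ζ z) = ζ * φ z := by
  have hrot : Tendsto (fun z => ζ * φ z) (𝓝 x) (𝓝 0) := by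
    simpa [B.apply_self] using (B.analyticAt.continuousAt.const_mul ζ).tendsto
  exact hrot.eventually B.eventually_apply_inv

theorem eventually_comp_rotation (hζ : ζ ^ d = 1) : ∀ᶠ z in 𝓝 x, f (B.rotation ζ z) = f z := by
  have hσ : Tendsto (B.rotation ζ) (𝓝 x) (𝓝 x) := by
    simpa only [B.rotation_self] using B.analyticAt_rotation.continuousAt.tendsto
  filter_upwards [hσ.eventually B.eventually_sub_eq_pow, B.eventually_sub_eq_pow,
    B.eventually_apply_rotation] with z hσz hz hφσz
  rw [← sub_left_inj (a := f x), hσz, hz, hφσz, mul_pow, hζ, one_mul]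

/-- The iterates stay in a disc around `0` on which `B.inv` inverts `φ`, as `‖ζ‖ = 1`. -/
theorem eventually_forall_iterate_rotation (hζ : ‖ζ‖ = 1) :
    ∀ᶠ z in 𝓝 x, ∀ i : ℕ, (B.rotation ζ)^[i] z = B.inv (ζ ^ i * φ z) ∧
      φ ((B.rotation ζ)^[i] z) = ζ ^ i * φ z := by
  obtain ⟨s, hs, hball⟩ := Metric.mem_nhds_iff.1 B.eventually_apply_inv
  have hinv : Set.RightInvOn B.inv φ (Metric.ball 0 s) := fun w hw => hball hw
  have hrot : Set.MapsTo (ζ * ·) (Metric.ball 0 s) (Metric.ball 0 s) := fun w hw => by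
    simpa [hζ] using hw
  have hφ : ∀ᶠ z in 𝓝 x, φ z ∈ Metric.ball 0 s := B.analyticAt.continuousAt.preimage_mem_nhds
    (by rw [B.apply_self]; exact Metric.ball_mem_nhds 0 hs)
  filter_upwards [B.eventually_inv_apply, hφ] with z hz hφz i
  have hiter := hinv.iterate_conj_apply hrot hz hφz i
  have hmem := hrot.iterate i hφz
  rw [mul_left_iterate_apply] at hiter hmem
  exact ⟨hiter, hiter ▸ hinv hmem⟩

theorem eventually_iterate_rotation_eq_self_iff (hζ : ‖ζ‖ = 1) (i : ℕ) :
    (∀ᶠ z in 𝓝 x, (B.rotation ζ)^[i] z = z) ↔ ζ ^ i = 1 := by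
  have hiter := B.eventually_forall_iterate_rotation hζ
  constructor
  · intro h
    have hφ := B.analyticAt.differentiableAt.hasDerivAt.eventually_ne B.deriv_ne_zero (c := 0)
    obtain ⟨z, ⟨hz, hzi⟩, hφz⟩ := (((hiter.and h).filter_mono nhdsWithin_le_nhds).and hφ).exists
    have hφi := (hz i).2
    rw [hzi] at hφi
    exact (mul_eq_right₀ hφz).1 hφi.symm
  · intro h
    filter_upwards [hiter, B.eventually_inv_apply] with z hz hzφ
    rw [(hz i).1, h, one_mul, hzφ]

theorem exists_iterate_rotation_eq (hd : d ≠ 0) (hζ : IsPrimitiveRoot ζ d) {η : ℂ → ℂ}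
    (hη : AnalyticAt ℂ η x) (hηx : η x = x) (hfη : ∀ᶠ z in 𝓝 x, f (η z) = f z) :
    ∃ i < d, ∀ᶠ z in 𝓝 x, η z = (B.rotation ζ)^[i] z := by
  have hηt : Tendsto η (𝓝 x) (𝓝 x) := by simpa only [hηx] using hη.continuousAt.tendsto
  have hpow : ∀ᶠ z in 𝓝 x, φ (η z) ^ d = φ z ^ d := by
    filter_upwards [hηt.eventually B.eventually_sub_eq_pow, B.eventually_sub_eq_pow, hfη]
      with z hηz hz hfz
    rw [← hηz, ← hz, hfz]
  obtain ⟨ω, hω, hφη⟩ := exists_pow_eq_one_and_eventually_eq_mul hd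
    (B.analyticAt.comp_of_eq hη hηx).differentiableAt B.analyticAt.differentiableAt
    (by simp [hηx, B.apply_self]) B.apply_self B.deriv_ne_zero hpow
  have : NeZero d := ⟨hd⟩
  obtain ⟨i, hi, rfl⟩ := hζ.eq_pow_of_pow_eq_one hω
  refine ⟨i, hi, ?_⟩
  filter_upwards [hφη, B.eventually_forall_iterate_rotation (hζ.norm'_eq_one hd),
    hηt.eventually B.eventually_inv_apply] with z hφz hz hηz
  rw [(hz i).1, ← show φ (η z) = _ from hφz, hηz]

end IsBottcherCoord

theorem symmetry_germs_cyclic_of_order_valency_general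
    (H : ℂ → ℂ) (x : ℂ) (n : ℕ) (d : ℕ) (hval : HasValency (H^[n]) x d) :
    ∃ σ : ℂ → ℂ, AnalyticAt ℂ σ x ∧ σ x = x ∧ deriv σ x ≠ 0 ∧
      (∀ᶠ z in 𝓝 x, H^[n] (σ z) = H^[n] z) ∧
      (∀ᶠ z in 𝓝 x, σ^[d] z = z) ∧
      (∀ i : ℕ, 0 < i → i < d → ¬ (∀ᶠ z in 𝓝 x, σ^[i] z = z)) ∧
      (∀ η : ℂ → ℂ, AnalyticAt ℂ η x → η x = x → deriv η x ≠ 0 →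
        (∀ᶠ z in 𝓝 x, H^[n] (η z) = H^[n] z) →
        ∃ i : ℕ, i < d ∧ ∀ᶠ z in 𝓝 x, η z = σ^[i] z) := by
  have hd := hval.ne_zero
  obtain ⟨φ, B⟩ := hval.exists_isBottcherCoord
  obtain ⟨ζ, hζ⟩ : ∃ ζ : ℂ, IsPrimitiveRoot ζ d := ⟨_, Complex.isPrimitiveRoot_exp d hd⟩
  have hζ1 := hζ.norm'_eq_one hd
  refine ⟨B.rotation ζ, B.analyticAt_rotation, B.rotation_self, ?_,
    B.eventually_comp_rotation hζ.pow_eq_one,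
    (B.eventually_iterate_rotation_eq_self_iff hζ1 d).2 hζ.pow_eq_one,
    fun i hi hid h => hζ.pow_ne_one_of_pos_of_lt hi.ne' hid
      ((B.eventually_iterate_rotation_eq_self_iff hζ1 i).1 h),
    fun η hη hηx _ hfη => B.exists_iterate_rotation_eq hd hζ hη hηx hfη⟩
  rw [B.hasDerivAt_rotation.deriv]
  exact hζ.ne_zero hd

/-- Let `x` be pre-periodic to a non-critical periodic orbit with least pre-period `n`
and period `p`, with `val(H, H^j(x)) = 1` for all `j ≥ n` and `d = val(H^n, x) ≥ 2`.
Then the germs at `x` of conformal maps `η` fixing `x` with `H^n ∘ η = H^n` near `x`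
form a cyclic group of order `d` under composition: there is a generator `σ` of germ
order exactly `d` whose iterates exhaust all such germs. -/
theorem symmetry_germs_cyclic_of_order_valency
    (H : ℂ → ℂ) (hH : Differentiable ℂ H)
    (x : ℂ) (n p : ℕ) (hp : 1 ≤ p)
    (hper : H^[p] (H^[n] x) = H^[n] x)
    (hpmin : ∀ q : ℕ, 1 ≤ q → q < p → H^[q] (H^[n] x) ≠ H^[n] x)
    (hnmin : ∀ m : ℕ, m < n → H^[p] (H^[m] x) ≠ H^[m] x)
    (hnoncrit : ∀ j : ℕ, n ≤ j → deriv H (H^[j] x) ≠ 0)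
    (d : ℕ) (hd : 2 ≤ d) (hval : HasValency (H^[n]) x d) :
    ∃ σ : ℂ → ℂ, AnalyticAt ℂ σ x ∧ σ x = x ∧ deriv σ x ≠ 0 ∧
      (∀ᶠ z in 𝓝 x, H^[n] (σ z) = H^[n] z) ∧
      (∀ᶠ z in 𝓝 x, σ^[d] z = z) ∧
      (∀ i : ℕ, 0 < i → i < d → ¬ (∀ᶠ z in 𝓝 x, σ^[i] z = z)) ∧
      (∀ η : ℂ → ℂ, AnalyticAt ℂ η x → η x = x → deriv η x ≠ 0 →
        (∀ᶠ z in 𝓝 x, H^[n] (η z) = H^[n] z) →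
        ∃ i : ℕ, i < d ∧ ∀ᶠ z in 𝓝 x, η z = σ^[i] z) :=
  symmetry_germs_cyclic_of_order_valency_general H x n d hval
end
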